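/- Let Ω ⊂ ℝ² be open, let A : Ω → ℝ² be C¹, and let σ : Ω → ℂ be C² with |σ(x)| = 1 for all x and ∂_j σ = 2iσA_j on Ω for j = 1,2. Define the magnetic Laplacian Δ_A u := Δu − 2iA·∇u − i(div A)u − |A|²u and the antilinear operator Ku := σ·conj(u). Then for every u ∈ C²(Ω;ℂ): Δ_A(Ku) = K(Δ_A u) on Ω. In particular, if λ ∈ ℝ and −Δ_A u = λu on Ω, then the function Ku also satisfies −Δ_A(Ku) = λ·(Ku) on Ω, so K maps eigenfunctions of −Δ_A to eigenfunctions with the same eigenvalue. -/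

import Mathlib

open MeasureTheory Complex Set

noncomputable section

abbrev Pt : Type := ℝ × ℝ

/-- First partial derivative `∂₁ f` of a function on `ℝ²`. -/
def pd1 {E : Type*} [NormedAddCommGroup E] [NormedSpace ℝ E] (f : Pt → E) (x : Pt) : E :=
  fderiv ℝ f x (1, 0)

/-- Second partial derivative `∂₂ f` of a function on `ℝ²`. -/
def pd2 {E : Type*} [NormedAddCommGroup E] [NormedSpace ℝ E] (f : Pt → E) (x : Pt) : E :=
  fderiv ℝ f x (0, 1)

/-- `rot A = ∂₁ A₂ - ∂₂ A₁`. -/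
def rot2 (A : Pt → Pt) (x : Pt) : ℝ :=
  pd1 (fun y => (A y).2) x - pd2 (fun y => (A y).1) x

/-- `div A = ∂₁ A₁ + ∂₂ A₂`. -/
def div2 (A : Pt → Pt) (x : Pt) : ℝ :=
  pd1 (fun y => (A y).1) x + pd2 (fun y => (A y).2) x

/-- Squared Euclidean norm of the magnetic gradient `∇u - iAu`. -/
def mgradSq (A : Pt → Pt) (u : Pt → ℂ) (x : Pt) : ℝ :=
  ‖pd1 u x - Complex.I * ((A x).1 : ℂ) * u x‖ ^ 2 +
    ‖pd2 u x - Complex.I * ((A x).2 : ℂ) * u x‖ ^ 2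

/-- The Laplacian `Δu = ∂₁²u + ∂₂²u`. -/
def lap2 (u : Pt → ℂ) (x : Pt) : ℂ := pd1 (pd1 u) x + pd2 (pd2 u) x

/-- The magnetic Laplacian `Δ_A u = Δu - 2iA·∇u - i(div A)u - |A|²u = (∇ - iA)²u`. -/
def magLap (A : Pt → Pt) (u : Pt → ℂ) (x : Pt) : ℂ :=
  lap2 u x - 2 * Complex.I * (((A x).1 : ℂ) * pd1 u x + ((A x).2 : ℂ) * pd2 u x) -
    Complex.I * ((div2 A x : ℝ) : ℂ) * u x - (((A x).1 ^ 2 + (A x).2 ^ 2 : ℝ) : ℂ) * u x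

/-!
Write `Dⱼ = ∂ⱼ - iAⱼ`, so that `Δ_A u = D₁D₁u + D₂D₂u` for `u ∈ C²`. Since `∂ⱼσ = 2iσAⱼ`,
`Dⱼ(σ ū) = σ (∂ⱼu - iAⱼu)‾ = σ (Dⱼu)‾`: multiplying by `σ` turns the conjugate potential `-A`
back into `A`. Hence `K` commutes with each `Dⱼ`, and so with `Δ_A`. As `λ` is real, `K` maps
`λ`-eigenfunctions to `λ`-eigenfunctions.
-/

open Filter Topology ComplexConjugate

section CovariantDerivative

variable {E : Type*} [NormedAddCommGroup E] [NormedSpace ℝ E]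

theorem fderiv_conj_apply (u : E → ℂ) (x e : E) :
    fderiv ℝ (fun y => conj (u y)) x e = conj (fderiv ℝ u x e) :=
  congr($(fderiv_star (𝕜 := ℝ) (f := u) (x := x)) e)

theorem fderiv_ofReal_apply {a : E → ℝ} {x : E} (ha : DifferentiableAt ℝ a x) (e : E) :
    fderiv ℝ (fun y => (a y : ℂ)) x e = fderiv ℝ a x e :=
  congr($((ofRealCLM.hasFDerivAt.comp x ha.hasFDerivAt).fderiv) e)

theorem ContDiffAt.conj {n : WithTop ℕ∞} {u : E → ℂ} {x : E} (hu : ContDiffAt ℝ n u x) :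
    ContDiffAt ℝ n (fun y => conj (u y)) x :=
  conjCLE.contDiff.contDiffAt.comp x hu

theorem ContDiffAt.differentiableAt_fderiv_apply {u : E → ℂ} {x : E} (hu : ContDiffAt ℝ 2 u x)
    (e : E) : DifferentiableAt ℝ (fun y => fderiv ℝ u y e) x :=
  ((hu.fderiv_right (m := 1) (by norm_num)).differentiableAt one_ne_zero).clm_apply
    (differentiableAt_const e)

def covDeriv (a : E → ℝ) (e : E) (u : E → ℂ) (x : E) : ℂ :=
  fderiv ℝ u x e - I * a x * u x

variable {a : E → ℝ} {e : E} {σ u : E → ℂ} {x : E}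

theorem covDeriv_congr {v : E → ℂ} (h : u =ᶠ[𝓝 x] v) :
    covDeriv a e u x = covDeriv a e v x := by
  rw [covDeriv, covDeriv, h.fderiv_eq, h.eq_of_nhds]

theorem ContDiffAt.differentiableAt_covDeriv (hu : ContDiffAt ℝ 2 u x)
    (ha : DifferentiableAt ℝ a x) : DifferentiableAt ℝ (covDeriv a e u) x := by
  have hux : DifferentiableAt ℝ u x := hu.differentiableAt (by norm_num)
  exact (hu.differentiableAt_fderiv_apply e).sub (by fun_prop)

theorem covDeriv_covDeriv (hu : ContDiffAt ℝ 2 u x) (ha : DifferentiableAt ℝ a x) :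
    covDeriv a e (covDeriv a e u) x = fderiv ℝ (fun y => fderiv ℝ u y e) x e
      - I * fderiv ℝ a x e * u x - 2 * I * a x * fderiv ℝ u x e - a x ^ 2 * u x := by
  have hux : DifferentiableAt ℝ u x := hu.differentiableAt (by norm_num)
  have hau : DifferentiableAt ℝ (fun y => I * a y * u y) x := by fun_prop
  have hDu : covDeriv a e u = fun y => fderiv ℝ u y e - I * a y * u y := rfl
  rw [covDeriv, hDu, fderiv_fun_sub (hu.differentiableAt_fderiv_apply e) hau,
    fderiv_fun_mul (by fun_prop) hux, fderiv_const_mul (by fun_prop)]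
  simp only [sub_apply, add_apply, smul_apply, smul_eq_mul, fderiv_ofReal_apply ha]
  linear_combination (a x ^ 2 * u x) * I_mul_I

theorem covDeriv_mul_conj (hσ : DifferentiableAt ℝ σ x) (hu : DifferentiableAt ℝ u x)
    (hσe : fderiv ℝ σ x e = 2 * I * σ x * a x) :
    covDeriv a e (fun y => σ y * conj (u y)) x = σ x * conj (covDeriv a e u x) := by
  rw [covDeriv, covDeriv, fderiv_fun_mul hσ (by fun_prop)]
  simp only [add_apply, smul_apply, smul_eq_mul, fderiv_conj_apply, hσe, map_sub, map_mul,
    conj_I, conj_ofReal]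
  ring

theorem covDeriv_covDeriv_mul_conj
    (hσ : ∀ᶠ y in 𝓝 x, DifferentiableAt ℝ σ y ∧ fderiv ℝ σ y e = 2 * I * σ y * a y)
    (hu : ContDiffAt ℝ 2 u x) (ha : DifferentiableAt ℝ a x) :
    covDeriv a e (covDeriv a e fun y => σ y * conj (u y)) x =
      σ x * conj (covDeriv a e (covDeriv a e u) x) := by
  have hK : covDeriv a e (fun y => σ y * conj (u y)) =ᶠ[𝓝 x]
      fun y => σ y * conj (covDeriv a e u y) := by
    filter_upwards [hσ, hu.eventually (by simp)] with y ⟨hσy, hσey⟩ huy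
    exact covDeriv_mul_conj hσy (huy.differentiableAt (by norm_num)) hσey
  rw [covDeriv_congr hK]
  exact covDeriv_mul_conj hσ.self_of_nhds.1 (hu.differentiableAt_covDeriv ha) hσ.self_of_nhds.2

end CovariantDerivative

theorem magLap_eq_covDeriv {A : Pt → Pt} {u : Pt → ℂ} {x : Pt} (hu : ContDiffAt ℝ 2 u x)
    (hA : DifferentiableAt ℝ A x) :
    magLap A u x =
      covDeriv (fun y => (A y).1) (1, 0) (covDeriv (fun y => (A y).1) (1, 0) u) x +
        covDeriv (fun y => (A y).2) (0, 1) (covDeriv (fun y => (A y).2) (0, 1) u) x := by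
  rw [covDeriv_covDeriv hu hA.fst, covDeriv_covDeriv hu hA.snd]
  unfold magLap lap2 div2 pd1 pd2
  push_cast
  ring

theorem statement18_general (Ω : Set Pt) (hΩo : IsOpen Ω)
    (A : Pt → Pt) (hA : ContDiffOn ℝ 1 A Ω)
    (σ : Pt → ℂ) (hσ : ContDiffOn ℝ 2 σ Ω)
    (hσd1 : ∀ x ∈ Ω, pd1 σ x = 2 * Complex.I * σ x * ((A x).1 : ℂ))
    (hσd2 : ∀ x ∈ Ω, pd2 σ x = 2 * Complex.I * σ x * ((A x).2 : ℂ)) :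
    (∀ u : Pt → ℂ, ContDiffOn ℝ 2 u Ω → ∀ x ∈ Ω,
        magLap A (fun y => σ y * (starRingEnd ℂ) (u y)) x =
          σ x * (starRingEnd ℂ) (magLap A u x)) ∧
      (∀ u : Pt → ℂ, ContDiffOn ℝ 2 u Ω → ∀ lam : ℝ,
        (∀ x ∈ Ω, -magLap A u x = (lam : ℂ) * u x) →
        ∀ x ∈ Ω, -magLap A (fun y => σ y * (starRingEnd ℂ) (u y)) x =
          (lam : ℂ) * (σ x * (starRingEnd ℂ) (u x))) := by
  have hcomm : ∀ u : Pt → ℂ, ContDiffOn ℝ 2 u Ω → ∀ x ∈ Ω,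
      magLap A (fun y => σ y * conj (u y)) x = σ x * conj (magLap A u x) := by
    intro u hu x hx
    have hΩx : Ω ∈ 𝓝 x := hΩo.mem_nhds hx
    have hux := hu.contDiffAt hΩx
    have hAx : DifferentiableAt ℝ A x := (hA.contDiffAt hΩx).differentiableAt one_ne_zero
    have hσΩ : ∀ᶠ y in 𝓝 x, DifferentiableAt ℝ σ y :=
      eventually_of_mem hΩx fun y hy =>
        (hσ.contDiffAt (hΩo.mem_nhds hy)).differentiableAt (by norm_num)
    have gauge₁ := hσΩ.and (eventually_of_mem hΩx hσd1)
    have gauge₂ := hσΩ.and (eventually_of_mem hΩx hσd2)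
    rw [magLap_eq_covDeriv ((hσ.contDiffAt hΩx).mul hux.conj) hAx, magLap_eq_covDeriv hux hAx,
      covDeriv_covDeriv_mul_conj gauge₁ hux hAx.fst,
      covDeriv_covDeriv_mul_conj gauge₂ hux hAx.snd, map_add, mul_add]
  refine ⟨hcomm, fun u hu lam heig x hx => ?_⟩
  rw [hcomm u hu x hx, ← neg_neg (magLap A u x), heig x hx]
  simp only [map_neg, map_mul, conj_ofReal]
  ring

/-- If `σ` is a `C²` unimodular function on `Ω` with `∂_j σ = 2iσA_j`, then the antilinear
operator `Ku = σ·conj(u)` commutes with the magnetic Laplacian `Δ_A` on `C²` functions;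
in particular `K` maps eigenfunctions of `-Δ_A` to eigenfunctions with the same
eigenvalue. -/
theorem statement18 (Ω : Set Pt) (hΩo : IsOpen Ω)
    (A : Pt → Pt) (hA : ContDiffOn ℝ 1 A Ω)
    (σ : Pt → ℂ) (hσ : ContDiffOn ℝ 2 σ Ω)
    (hσ1 : ∀ x ∈ Ω, ‖σ x‖ = 1)
    (hσd1 : ∀ x ∈ Ω, pd1 σ x = 2 * Complex.I * σ x * ((A x).1 : ℂ))
    (hσd2 : ∀ x ∈ Ω, pd2 σ x = 2 * Complex.I * σ x * ((A x).2 : ℂ)) :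
    (∀ u : Pt → ℂ, ContDiffOn ℝ 2 u Ω → ∀ x ∈ Ω,
        magLap A (fun y => σ y * (starRingEnd ℂ) (u y)) x =
          σ x * (starRingEnd ℂ) (magLap A u x)) ∧
      (∀ u : Pt → ℂ, ContDiffOn ℝ 2 u Ω → ∀ lam : ℝ,
        (∀ x ∈ Ω, -magLap A u x = (lam : ℂ) * u x) →
        ∀ x ∈ Ω, -magLap A (fun y => σ y * (starRingEnd ℂ) (u y)) x =
          (lam : ℂ) * (σ x * (starRingEnd ℂ) (u x))) :=
  statement18_general Ω hΩo A hA σ hσ hσd1 hσd2
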